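/- arXiv:1103.3626 — 3 statements merged into one kernel-verified Lean document; each statement's English description precedes it below -/
import Mathlib

section
/- Let v be odd, v = d·m, and let a_0,...,a_{v-1}, b_0,...,b_{v-1} ∈ {-1,1}. Define A_j = Σ_{i=0}^{m-1} a_{j+id} and B_j = Σ_{i=0}^{m-1} b_{j+id} for j = 0,...,d-1 (indices mod v). If PSD_A(s) + PSD_B(s) = 2v - 2 for all s = 1,...,v-1 and PSD_A(0) + PSD_B(0) = 4v - 2, then Σ_{j=0}^{d-1} (A_j² + B_j²) = 2(v + m - 1). -/
/-!
Sampling the length-`v` DFT of `a` at the `d` multiples of `m` gives the length-`d` DFT of the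
compressed sequence `A_j`, so by Parseval's identity on `ℤ/d` the sum of `PSD_A(tm) + PSD_B(tm)`
over `t < d` is `d · Σ_j (A_j² + B_j²)`. The hypotheses evaluate the same sum as
`(4v - 2) + (d - 1)(2v - 2) = d · 2(v + m - 1)`.
-/

noncomputable def PSD (v : ℕ) (x : ℕ → ℝ) (k : ℕ) : ℝ :=
  ‖∑ α ∈ Finset.range v, (x α : ℂ)
    * Complex.exp (2 * (Real.pi : ℂ) * Complex.I * α * k / v)‖ ^ 2

open Finset Complex ComplexConjugate Real

theorem Finset.sum_range_mul_eq_sum_sum {M : Type*} [AddCommMonoid M] (d m : ℕ) (f : ℕ → M) :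
    ∑ α ∈ range (d * m), f α = ∑ j ∈ range d, ∑ i ∈ range m, f (j + i * d) := by
  induction m with
  | zero => simp
  | succ m ih =>
    rw [mul_add_one, sum_range_add, ih]
    simp only [sum_range_succ, sum_add_distrib]
    congr 1
    exact sum_congr rfl fun j _ => by rw [add_comm, mul_comm]

namespace IsPrimitiveRoot

variable {ζ : ℂ} {d : ℕ}

theorem sum_pow_mul_conj_pow (hζ : IsPrimitiveRoot ζ d) {j k : ℕ} (hj : j < d) (hk : k < d) :
    ∑ t ∈ range d, ζ ^ (j * t) * conj (ζ ^ (k * t)) = if j = k then (d : ℂ) else 0 := by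
  have hd : d ≠ 0 := by omega
  have hconj (n : ℕ) : conj (ζ ^ n) = (ζ ^ n)⁻¹ :=
    (inv_eq_conj (by rw [norm_pow, hζ.norm'_eq_one hd, one_pow])).symm
  have hterm (t : ℕ) : ζ ^ (j * t) * conj (ζ ^ (k * t)) = (ζ ^ j * (ζ ^ k)⁻¹) ^ t := by
    rw [hconj, pow_mul, pow_mul, mul_pow, inv_pow]
  simp_rw [hterm]
  split_ifs with hjk
  · subst hjk
    simp [mul_inv_cancel₀ (pow_ne_zero j (hζ.ne_zero hd))]
  · have hne : ζ ^ j * (ζ ^ k)⁻¹ ≠ 1 := fun h =>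
      hjk (hζ.pow_inj hj hk (mul_inv_eq_one₀ (pow_ne_zero k (hζ.ne_zero hd)) |>.mp h))
    have hpow : (ζ ^ j * (ζ ^ k)⁻¹) ^ d = 1 := by
      rw [mul_pow, inv_pow, ← pow_mul, ← pow_mul, mul_comm j, mul_comm k, pow_mul, pow_mul,
        hζ.pow_eq_one, one_pow, one_pow, inv_one, mul_one]
    rw [geom_sum_eq hne, hpow, sub_self, zero_div]

theorem sum_norm_sq_sum_mul_pow (hζ : IsPrimitiveRoot ζ d) (c : ℕ → ℂ) :
    ∑ t ∈ range d, ‖∑ j ∈ range d, c j * ζ ^ (j * t)‖ ^ 2 = d * ∑ j ∈ range d, ‖c j‖ ^ 2 := by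
  apply ofReal_injective
  push_cast
  simp_rw [← mul_conj']
  calc ∑ t ∈ range d, (∑ j ∈ range d, c j * ζ ^ (j * t)) * conj (∑ k ∈ range d, c k * ζ ^ (k * t))
      = ∑ j ∈ range d, ∑ k ∈ range d,
          c j * conj (c k) * ∑ t ∈ range d, ζ ^ (j * t) * conj (ζ ^ (k * t)) := by
        simp_rw [map_sum, sum_mul_sum, mul_sum, map_mul]
        rw [sum_comm]
        refine sum_congr rfl fun j _ => ?_
        rw [sum_comm]
        exact sum_congr rfl fun k _ => sum_congr rfl fun t _ => by ring
    _ = ∑ j ∈ range d, ∑ k ∈ range d, c j * conj (c k) * if j = k then (d : ℂ) else 0 :=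
        sum_congr rfl fun j hj => sum_congr rfl fun k hk => by
          rw [hζ.sum_pow_mul_conj_pow (mem_range.mp hj) (mem_range.mp hk)]
    _ = d * ∑ j ∈ range d, c j * conj (c j) := by
        simp only [mul_ite, mul_zero, sum_ite_eq, mem_range, mul_sum]
        exact sum_congr rfl fun j hj => by rw [if_pos (mem_range.mp hj), mul_comm]

end IsPrimitiveRoot

theorem Complex.exp_two_pi_I_mul_div (v α k : ℕ) :
    exp (2 * π * I * α * k / v) = exp (2 * π * I / v) ^ (α * k) := by
  rw [← exp_nat_mul]
  congr 1
  push_cast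
  ring

theorem sum_range_mul_mul_pow_mul {ζ : ℂ} {d m : ℕ} (hζ : ζ ^ (d * m) = 1) (x : ℕ → ℂ) (t : ℕ) :
    ∑ α ∈ range (d * m), x α * ζ ^ (α * (t * m))
      = ∑ j ∈ range d, (∑ i ∈ range m, x (j + i * d)) * (ζ ^ m) ^ (j * t) := by
  rw [sum_range_mul_eq_sum_sum]
  refine sum_congr rfl fun j _ => ?_
  rw [sum_mul]
  refine sum_congr rfl fun i _ => ?_
  rw [show (j + i * d) * (t * m) = m * (j * t) + d * m * (i * t) by ring, pow_add,
    pow_mul ζ (d * m), hζ, one_pow, mul_one, pow_mul]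

theorem sum_range_PSD_mul {d m : ℕ} (hdm : d * m ≠ 0) (x : ℕ → ℝ) :
    ∑ t ∈ range d, PSD (d * m) x (t * m)
      = d * ∑ j ∈ range d, (∑ i ∈ range m, x (j + i * d)) ^ 2 := by
  have hζ := isPrimitiveRoot_exp (d * m) hdm
  have hω : IsPrimitiveRoot (exp (2 * π * I / (d * m : ℕ)) ^ m) d :=
    hζ.pow (Nat.pos_of_ne_zero hdm) (mul_comm d m)
  simp only [PSD, exp_two_pi_I_mul_div, sum_range_mul_mul_pow_mul hζ.pow_eq_one]
  rw [hω.sum_norm_sq_sum_mul_pow]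
  simp only [← ofReal_sum, norm_real, Real.norm_eq_abs, sq_abs]

theorem stmt4_general (v d m : ℕ) (hv0 : 0 < v) (hdm : v = d * m)
    (a b : ℕ → ℝ)
    (hpsd : ∀ s : ℕ, 1 ≤ s → s ≤ v - 1 → PSD v a s + PSD v b s = 2 * v - 2)
    (hpsd0 : PSD v a 0 + PSD v b 0 = 4 * v - 2) :
    ∑ j ∈ Finset.range d,
        ((∑ i ∈ Finset.range m, a (j + i * d)) ^ 2
          + (∑ i ∈ Finset.range m, b (j + i * d)) ^ 2)
      = 2 * ((v : ℝ) + m - 1) := by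
  have hdm0 : d * m ≠ 0 := hdm ▸ hv0.ne'
  have hm : 0 < m := Nat.pos_of_ne_zero (right_ne_zero_of_mul hdm0)
  obtain ⟨d, rfl⟩ := Nat.exists_eq_add_one_of_ne_zero (left_ne_zero_of_mul hdm0)
  have hsum : ∑ t ∈ range (d + 1), (PSD v a (t * m) + PSD v b (t * m))
      = 4 * v - 2 + d * (2 * v - 2) := by
    rw [sum_range_succ', zero_mul, hpsd0, sum_congr rfl fun t ht => hpsd _ ?_ ?_, sum_const,
      card_range, nsmul_eq_mul, add_comm]
    · exact Nat.mul_pos t.succ_pos hm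
    · have : (t + 1) * m ≤ d * m := Nat.mul_le_mul_right m (mem_range.mp ht)
      rw [hdm, add_one_mul d m]
      omega
  rw [sum_add_distrib, hdm, sum_range_PSD_mul hdm0, sum_range_PSD_mul hdm0, ← mul_add,
    ← sum_add_distrib] at hsum
  refine mul_left_cancel₀ (a := ((d + 1 : ℕ) : ℝ)) (by positivity) ?_
  rw [hsum, hdm]
  push_cast
  ring

/-- Generalized constraint: `∑_j (A_j² + B_j²) = 2(v+m-1)`. -/
theorem stmt4 (v d m : ℕ) (hv : Odd v) (hv0 : 0 < v) (hdm : v = d * m)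
    (a b : ℕ → ℝ)
    (ha : ∀ i, a i = -1 ∨ a i = 1) (hb : ∀ i, b i = -1 ∨ b i = 1)
    (hpsd : ∀ s : ℕ, 1 ≤ s → s ≤ v - 1 → PSD v a s + PSD v b s = 2 * v - 2)
    (hpsd0 : PSD v a 0 + PSD v b 0 = 4 * v - 2) :
    ∑ j ∈ Finset.range d,
        ((∑ i ∈ Finset.range m, a (j + i * d)) ^ 2
          + (∑ i ∈ Finset.range m, b (j + i * d)) ^ 2)
      = 2 * ((v : ℝ) + m - 1) :=
  stmt4_general v d m hv0 hdm a b hpsd hpsd0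
end

section
/- Let v = 5m be odd and a_i, b_i ∈ {-1,1} satisfy PSD_A(s)+PSD_B(s) = 2v-2 for s = 1,...,v-1 and = 4v-2 at s = 0. With A_j = Σ_{i=0}^{m-1} a_{5i+j} and B_j = Σ_{i=0}^{m-1} b_{5i+j} for j = 0,...,4, one has Σ_{0≤k<l<5} (A_k A_l + B_k B_l) = 4m, and Σ_{l-k∈{2,3}} (A_k A_l + B_k B_l) = Σ_{l-k∈{1,4}} (A_k A_l + B_k B_l). -/
open Finset Complex
open scoped Real ComplexConjugate

section Pentagon

variable {R : Type*} [CommRing R]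

def pentagonSideSum (X : ℕ → R) : R :=
  ∑ k ∈ range 5, X k * X ((k + 1) % 5)

def pentagonDiagonalSum (X : ℕ → R) : R :=
  ∑ k ∈ range 5, X k * X ((k + 2) % 5)

@[simp, norm_cast]
theorem Int.cast_pentagonSideSum (X : ℕ → ℤ) :
    ((pentagonSideSum X : ℤ) : R) = pentagonSideSum fun j => (X j : R) := by
  simp [pentagonSideSum]

@[simp, norm_cast]
theorem Int.cast_pentagonDiagonalSum (X : ℕ → ℤ) :
    ((pentagonDiagonalSum X : ℤ) : R) = pentagonDiagonalSum fun j => (X j : R) := by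
  simp [pentagonDiagonalSum]

@[simp, norm_cast]
theorem Complex.ofReal_pentagonSideSum (X : ℕ → ℝ) :
    ((pentagonSideSum X : ℝ) : ℂ) = pentagonSideSum fun j => (X j : ℂ) := by
  simp [pentagonSideSum]

@[simp, norm_cast]
theorem Complex.ofReal_pentagonDiagonalSum (X : ℕ → ℝ) :
    ((pentagonDiagonalSum X : ℝ) : ℂ) = pentagonDiagonalSum fun j => (X j : ℂ) := by
  simp [pentagonDiagonalSum]

theorem sq_sum_range_five (X : ℕ → R) :
    (∑ j ∈ range 5, X j) ^ 2 =
      ∑ j ∈ range 5, X j ^ 2 + 2 * (pentagonSideSum X + pentagonDiagonalSum X) := by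
  simp only [sum_range_succ, sum_range_zero, pentagonSideSum, pentagonDiagonalSum]
  ring

theorem sum_range_five_sum_range_mul (X : ℕ → R) :
    ∑ l ∈ range 5, ∑ k ∈ range l, X k * X l = pentagonSideSum X + pentagonDiagonalSum X := by
  simp only [sum_range_succ, sum_range_zero, pentagonSideSum, pentagonDiagonalSum]
  ring

theorem sum_filter_pentagon_sides (X : ℕ → R) :
    ∑ p ∈ (range 5 ×ˢ range 5).filter (fun p => p.1 < p.2 ∧ (p.2 - p.1 = 1 ∨ p.2 - p.1 = 4)),
      X p.1 * X p.2 = pentagonSideSum X := by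
  simp [sum_filter, sum_product, sum_range_succ, pentagonSideSum]
  ring

theorem sum_filter_pentagon_diagonals (X : ℕ → R) :
    ∑ p ∈ (range 5 ×ˢ range 5).filter (fun p => p.1 < p.2 ∧ (p.2 - p.1 = 2 ∨ p.2 - p.1 = 3)),
      X p.1 * X p.2 = pentagonDiagonalSum X := by
  simp [sum_filter, sum_product, sum_range_succ, pentagonDiagonalSum]
  ring

theorem sum_mul_sum_pow_sub_of_pow_five_eq_one {ζ : R} (hζ : ζ ^ 5 = 1) (X : ℕ → R) :
    (∑ j ∈ range 5, X j * ζ ^ j) * ∑ j ∈ range 5, X j * ζ ^ (5 - j) =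
      ∑ j ∈ range 5, X j ^ 2 + pentagonSideSum X * (ζ + ζ ^ 4)
        + pentagonDiagonalSum X * (ζ ^ 2 + ζ ^ 3) := by
  simp only [sum_range_succ, sum_range_zero, pentagonSideSum, pentagonDiagonalSum]
  linear_combination (X 0 ^ 2 + X 1 ^ 2 + X 2 ^ 2 + X 3 ^ 2 + X 4 ^ 2
    + (X 0 * X 1 + X 1 * X 2 + X 2 * X 3 + X 3 * X 4) * ζ
    + (X 0 * X 2 + X 1 * X 3 + X 2 * X 4) * ζ ^ 2 + (X 0 * X 3 + X 1 * X 4) * ζ ^ 3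
    + X 0 * X 4 * ζ ^ 4) * hζ

end Pentagon

theorem PSD_at_zero (v : ℕ) (x : ℕ → ℝ) : PSD v x 0 = (∑ α ∈ range v, x α) ^ 2 := by
  simp only [PSD, Nat.cast_zero, mul_zero, zero_div, exp_zero, mul_one]
  rw [← ofReal_sum, norm_real, Real.norm_eq_abs, sq_abs]

theorem sum_range_mul_eq_sum_sum_residues {M : Type*} [AddCommMonoid M] (f : ℕ → M) (n m : ℕ) :
    ∑ α ∈ range (n * m), f α = ∑ j ∈ range n, ∑ i ∈ range m, f (n * i + j) := by
  induction m with
  | zero => simp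
  | succ m ih => simp only [Nat.mul_succ, sum_range_add, ih, sum_range_succ, sum_add_distrib]

theorem PSD_mul_at_right {n m : ℕ} (hn : n ≠ 0) (hm : m ≠ 0) (x : ℕ → ℝ) :
    PSD (n * m) x m =
      ‖∑ j ∈ range n, ((∑ i ∈ range m, x (n * i + j) : ℝ) : ℂ) * exp (2 * π * I / n) ^ j‖ ^ 2 := by
  have hζ := isPrimitiveRoot_exp n hn
  have hexp (α : ℕ) : exp (2 * π * I * α * m / (n * m : ℕ)) = exp (2 * π * I / n) ^ α := by
    rw [← exp_nat_mul]
    congr 1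
    push_cast
    field_simp
  simp only [PSD, hexp, sum_range_mul_eq_sum_sum_residues _ n m, ofReal_sum, sum_mul, pow_add,
    pow_mul, hζ.pow_eq_one, one_pow, one_mul]

theorem exists_int_eq_sum_of_sign {x : ℕ → ℝ} (hx : ∀ i, x i = -1 ∨ x i = 1) (s : Finset ℕ) :
    ∃ n : ℤ, ∑ i ∈ s, x i = n := by
  have (i : ℕ) : ∃ n : ℤ, x i = n := by
    rcases hx i with h | h
    exacts [⟨-1, by simp [h]⟩, ⟨1, by simp [h]⟩]
  choose y hy using this
  exact ⟨∑ i ∈ s, y i, by push_cast [hy]; rfl⟩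

theorem Irrational.eq_zero_of_intCast_add_mul_eq {x : ℝ} (hx : Irrational x) {p q r : ℤ}
    (h : p + q * x = r) : q = 0 := by
  by_contra hq
  exact ((hx.intCast_mul hq).intCast_add p).ne_int r h

theorem irrational_of_sq_add_self_eq_one {c : ℝ} (hc : c ^ 2 + c = 1) : Irrational c := by
  have h5 : (2 * c + 1) ^ 2 = √5 ^ 2 := by
    rw [Real.sq_sqrt (by norm_num)]
    linear_combination 4 * hc
  have hirr : Irrational √5 := by exact_mod_cast Nat.prime_five.irrational_sqrt
  have : Irrational (2 * c + 1) := by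
    rcases eq_or_eq_neg_of_sq_eq_sq _ _ h5 with h | h <;> rw [h]
    exacts [hirr, hirr.neg]
  have h : Irrational ((2 : ℕ) * c + (1 : ℕ)) := by exact_mod_cast this
  exact (h.of_add_natCast 1).of_natCast_mul 2

namespace IsPrimitiveRoot

variable {ζ : ℂ}

theorem conj_pow_eq_pow_sub {n j : ℕ} (hζ : IsPrimitiveRoot ζ n) (hn : n ≠ 0) (hj : j ≤ n) :
    conj (ζ ^ j) = ζ ^ (n - j) := by
  rw [← inv_eq_conj (by rw [norm_pow, hζ.norm'_eq_one hn, one_pow]), inv_eq_of_mul_eq_one_left]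
  rw [← pow_add, Nat.sub_add_cancel hj, hζ.pow_eq_one]

theorem add_pow_four_eq_two_mul_re (hζ : IsPrimitiveRoot ζ 5) : ζ + ζ ^ 4 = (2 * ζ.re : ℝ) := by
  have h := hζ.conj_pow_eq_pow_sub (j := 1) (by norm_num) (by norm_num)
  rw [pow_one] at h
  rw [← add_conj, h]

theorem one_add_add_sq_add_pow_three_add_pow_four (hζ : IsPrimitiveRoot ζ 5) :
    1 + ζ + ζ ^ 2 + ζ ^ 3 + ζ ^ 4 = 0 := by
  simpa [sum_range_succ] using hζ.geom_sum_eq_zero (by norm_num)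

theorem irrational_two_mul_re (hζ : IsPrimitiveRoot ζ 5) : Irrational (2 * ζ.re) := by
  apply irrational_of_sq_add_self_eq_one
  apply ofReal_injective
  have h := hζ.add_pow_four_eq_two_mul_re
  push_cast at h ⊢
  rw [← h]
  linear_combination hζ.one_add_add_sq_add_pow_three_add_pow_four + (2 + ζ ^ 3) * hζ.pow_eq_one

theorem norm_sq_sum_range_five (hζ : IsPrimitiveRoot ζ 5) (X : ℕ → ℝ) :
    ‖∑ j ∈ range 5, (X j : ℂ) * ζ ^ j‖ ^ 2 =
      ∑ j ∈ range 5, X j ^ 2 - pentagonDiagonalSum X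
        + 2 * ζ.re * (pentagonSideSum X - pentagonDiagonalSum X) := by
  have hconj : conj (∑ j ∈ range 5, (X j : ℂ) * ζ ^ j) =
      ∑ j ∈ range 5, (X j : ℂ) * ζ ^ (5 - j) := by
    rw [map_sum]
    refine sum_congr rfl fun j hj => ?_
    rw [map_mul, conj_ofReal, hζ.conj_pow_eq_pow_sub (by norm_num) (by simp at hj; omega)]
  rw [Complex.sq_norm]
  apply ofReal_injective
  rw [← mul_conj, hconj, sum_mul_sum_pow_sub_of_pow_five_eq_one hζ.pow_eq_one]
  have hsum := hζ.add_pow_four_eq_two_mul_re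
  push_cast at hsum ⊢
  linear_combination
    (pentagonSideSum (fun j => (X j : ℂ)) - pentagonDiagonalSum (fun j => (X j : ℂ))) * hsum
      + pentagonDiagonalSum (fun j => (X j : ℂ)) * hζ.one_add_add_sq_add_pow_three_add_pow_four

end IsPrimitiveRoot

theorem stmt12_general (v m : ℕ) (hv0 : 0 < v) (hdm : v = 5 * m)
    (a b : ℕ → ℝ)
    (ha : ∀ i, a i = -1 ∨ a i = 1) (hb : ∀ i, b i = -1 ∨ b i = 1)
    (hpsd : ∀ s : ℕ, 1 ≤ s → s ≤ v - 1 → PSD v a s + PSD v b s = 2 * v - 2)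
    (hpsd0 : PSD v a 0 + PSD v b 0 = 4 * v - 2)
    (A B : ℕ → ℝ)
    (hA : ∀ j, A j = ∑ i ∈ Finset.range m, a (5 * i + j))
    (hB : ∀ j, B j = ∑ i ∈ Finset.range m, b (5 * i + j)) :
    (∑ l ∈ Finset.range 5, ∑ k ∈ Finset.range l, (A k * A l + B k * B l)) = 4 * m
    ∧ (∑ p ∈ (Finset.range 5 ×ˢ Finset.range 5).filter
          (fun p => p.1 < p.2 ∧ (p.2 - p.1 = 2 ∨ p.2 - p.1 = 3)),
          (A p.1 * A p.2 + B p.1 * B p.2))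
      = ∑ p ∈ (Finset.range 5 ×ˢ Finset.range 5).filter
          (fun p => p.1 < p.2 ∧ (p.2 - p.1 = 1 ∨ p.2 - p.1 = 4)),
          (A p.1 * A p.2 + B p.1 * B p.2) := by
  subst hdm
  have hm : m ≠ 0 := by omega
  have hζ : IsPrimitiveRoot (exp (2 * π * I / (5 : ℕ))) 5 := isPrimitiveRoot_exp 5 (by norm_num)
  have h0 := hpsd0
  rw [PSD_at_zero, PSD_at_zero, sum_range_mul_eq_sum_sum_residues,
    sum_range_mul_eq_sum_sum_residues] at h0
  simp only [← hA, ← hB, sq_sum_range_five] at h0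
  have h1 := hpsd m (by omega) (by omega)
  rw [PSD_mul_at_right (by norm_num) hm, PSD_mul_at_right (by norm_num) hm] at h1
  simp only [← hA, ← hB, hζ.norm_sq_sum_range_five] at h1
  have hSD : pentagonSideSum A + pentagonSideSum B =
      pentagonDiagonalSum A + pentagonDiagonalSum B := by
    choose Aℤ hAℤ using fun j => exists_int_eq_sum_of_sign (fun i => ha (5 * i + j)) (range m)
    choose Bℤ hBℤ using fun j => exists_int_eq_sum_of_sign (fun i => hb (5 * i + j)) (range m)
    obtain rfl : A = fun j => (Aℤ j : ℝ) := funext fun j => (hA j).trans (hAℤ j)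
    obtain rfl : B = fun j => (Bℤ j : ℝ) := funext fun j => (hB j).trans (hBℤ j)
    have hq := hζ.irrational_two_mul_re.eq_zero_of_intCast_add_mul_eq
      (p := ∑ j ∈ range 5, (Aℤ j ^ 2 + Bℤ j ^ 2) - pentagonDiagonalSum Aℤ - pentagonDiagonalSum Bℤ)
      (q := pentagonSideSum Aℤ + pentagonSideSum Bℤ
        - pentagonDiagonalSum Aℤ - pentagonDiagonalSum Bℤ)
      (r := 10 * m - 2) (by push_cast [sum_add_distrib] at h1 ⊢; linear_combination h1)
    exact_mod_cast (by linarith : pentagonSideSum Aℤ + pentagonSideSum Bℤ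
      = pentagonDiagonalSum Aℤ + pentagonDiagonalSum Bℤ)
  simp only [sum_add_distrib, sum_range_five_sum_range_mul, sum_filter_pentagon_sides,
    sum_filter_pentagon_diagonals]
  push_cast at h0 h1
  refine ⟨?_, hSD.symm⟩
  linear_combination (2 / 5) * (h0 - h1) + (1 + 4 * (exp (2 * π * I / 5)).re) / 5 * hSD

/-- The two constraints for `v = 5m`. -/
theorem stmt12 (v m : ℕ) (hv : Odd v) (hv0 : 0 < v) (hdm : v = 5 * m)
    (a b : ℕ → ℝ)
    (ha : ∀ i, a i = -1 ∨ a i = 1) (hb : ∀ i, b i = -1 ∨ b i = 1)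
    (hpsd : ∀ s : ℕ, 1 ≤ s → s ≤ v - 1 → PSD v a s + PSD v b s = 2 * v - 2)
    (hpsd0 : PSD v a 0 + PSD v b 0 = 4 * v - 2)
    (A B : ℕ → ℝ)
    (hA : ∀ j, A j = ∑ i ∈ Finset.range m, a (5 * i + j))
    (hB : ∀ j, B j = ∑ i ∈ Finset.range m, b (5 * i + j)) :
    (∑ l ∈ Finset.range 5, ∑ k ∈ Finset.range l, (A k * A l + B k * B l)) = 4 * m
    ∧ (∑ p ∈ (Finset.range 5 ×ˢ Finset.range 5).filter
          (fun p => p.1 < p.2 ∧ (p.2 - p.1 = 2 ∨ p.2 - p.1 = 3)),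
          (A p.1 * A p.2 + B p.1 * B p.2))
      = ∑ p ∈ (Finset.range 5 ×ˢ Finset.range 5).filter
          (fun p => p.1 < p.2 ∧ (p.2 - p.1 = 1 ∨ p.2 - p.1 = 4)),
          (A p.1 * A p.2 + B p.1 * B p.2) :=
  stmt12_general v m hv0 hdm a b ha hb hpsd hpsd0 A B hA hB
end

section
/- If there exists a supplementary difference set (X,Y) in Z/vZ with parameters (v;r,s;λ) where v is odd and λ = r + s - (v-1)/2, then the 2v × 2v matrix H = [[A, B],[-Bᵀ, Aᵀ]], with A, B the circulant (-1,1)-matrices with first rows determined by X and Y via a_i = -1 iff i ∈ X and b_i = -1 iff i ∈ Y, satisfies H·Hᵀ = block matrix [[2(v-1)I_v + 2J_v, 0],[0, 2(v-1)I_v + 2J_v]]. -/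
open Matrix


private lemma autocorr_aux (v : ℕ) [NeZero v] (X : Finset (ZMod v)) (f : ZMod v → ℤ)
    (hf : ∀ i, f i = if i ∈ X then -1 else 1) (d : ZMod v) :
    ∑ m : ZMod v, f m * f (m - d)
      = (v : ℤ) - 4 * X.card + 4 * ((X ×ˢ X).filter (fun p => p.1 - p.2 = d)).card := by
  have hchi : ∀ m, f m = 1 - 2 * (if m ∈ X then (1:ℤ) else 0) := by
    intro m; rw [hf]; split_ifs <;> ring
  have h1 : ∑ m : ZMod v, f m * f (m - d)
      = ∑ m : ZMod v, (1 - 2 * (if m ∈ X then (1:ℤ) else 0)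
          - 2 * (if m - d ∈ X then (1:ℤ) else 0)
          + 4 * ((if m ∈ X then (1:ℤ) else 0) * (if m - d ∈ X then (1:ℤ) else 0))) := by
    apply Finset.sum_congr rfl; intro m _
    rw [hchi m, hchi (m - d)]; ring
  rw [h1]
  rw [Finset.sum_add_distrib, Finset.sum_sub_distrib, Finset.sum_sub_distrib]
  have hcard : ∑ _m : ZMod v, (1:ℤ) = v := by
    simp [Finset.card_univ, ZMod.card]
  have hX1 : ∑ m : ZMod v, (if m ∈ X then (1:ℤ) else 0) = X.card := by
    simp [Finset.sum_boole, Finset.filter_mem_eq_inter]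
  have hX2 : ∑ m : ZMod v, (if m - d ∈ X then (1:ℤ) else 0) = X.card := by
    rw [← hX1]
    exact Fintype.sum_equiv (Equiv.subRight d) _ _ (fun m => rfl)
  have hN : ∑ m : ZMod v, ((if m ∈ X then (1:ℤ) else 0) * (if m - d ∈ X then (1:ℤ) else 0))
      = ((X ×ˢ X).filter (fun p => p.1 - p.2 = d)).card := by
    have : ∀ m : ZMod v, (if m ∈ X then (1:ℤ) else 0) * (if m - d ∈ X then (1:ℤ) else 0)
        = if m ∈ X ∧ m - d ∈ X then 1 else 0 := by
      intro m; split_ifs <;> simp_all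
    rw [Finset.sum_congr rfl (fun m _ => this m), Finset.sum_boole]
    congr 1
    apply Finset.card_bij (fun m _ => (m, m - d))
    · intro m hm
      rw [Finset.mem_filter] at hm
      exact Finset.mem_filter.mpr ⟨Finset.mem_product.mpr ⟨hm.2.1, hm.2.2⟩, by ring⟩
    · intro a _ b _ h; exact congrArg Prod.fst h
    · intro p hp
      rw [Finset.mem_filter, Finset.mem_product] at hp
      have h2 : p.1 - d = p.2 := by rw [← hp.2]; ring
      refine ⟨p.1, Finset.mem_filter.mpr ⟨Finset.mem_univ _, hp.1.1, by rw [h2]; exact hp.1.2⟩, ?_⟩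
      exact Prod.ext rfl h2
  rw [← Finset.mul_sum, ← Finset.mul_sum, ← Finset.mul_sum, hcard, hX1, hX2, hN]
  ring

private lemma circ_mul_transpose_apply (v : ℕ) [NeZero v] (f : ZMod v → ℤ) (i j : ZMod v) :
    (circulant f * (circulant f)ᵀ) i j = ∑ m : ZMod v, f m * f (m - (i - j)) := by
  simp only [mul_apply, transpose_apply, circulant_apply]
  apply Fintype.sum_equiv (Equiv.subLeft i)
  intro k
  simp only [Equiv.subLeft_apply]
  congr 2
  ring

private lemma transpose_mul_circ_apply (v : ℕ) [NeZero v] (f : ZMod v → ℤ) (i j : ZMod v) :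
    ((circulant f)ᵀ * circulant f) i j = ∑ m : ZMod v, f m * f (m - (i - j)) := by
  simp only [mul_apply, transpose_apply, circulant_apply]
  apply Fintype.sum_equiv (Equiv.subRight j)
  intro k
  simp only [Equiv.subRight_apply]
  rw [mul_comm]
  congr 2
  ring

/-- From an SDS `(v;r,s;λ)` with `v` odd and `λ = r+s-(v-1)/2`, the block matrix
`H = [[A, B], [-Bᵀ, Aᵀ]]` satisfies `H Hᵀ = diag(2(v-1)I + 2J, 2(v-1)I + 2J)`. -/
theorem stmt18 (v : ℕ) [NeZero v] (hv : Odd v)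
    (r s lam : ℕ) (X Y : Finset (ZMod v))
    (hX : X.card = r) (hY : Y.card = s)
    (hSDS : ∀ d : ZMod v, d ≠ 0 →
      ((X ×ˢ X).filter (fun p => p.1 - p.2 = d)).card
        + ((Y ×ˢ Y).filter (fun p => p.1 - p.2 = d)).card = lam)
    (hlam : (lam : ℤ) = r + s - ((v : ℤ) - 1) / 2)
    (fa fb : ZMod v → ℤ)
    (hfa : ∀ i, fa i = if i ∈ X then -1 else 1)
    (hfb : ∀ i, fb i = if i ∈ Y then -1 else 1)
    :
    (Matrix.fromBlocks (Matrix.circulant fa) (Matrix.circulant fb)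
          (-(Matrix.circulant fb)ᵀ) (Matrix.circulant fa)ᵀ)
        * (Matrix.fromBlocks (Matrix.circulant fa) (Matrix.circulant fb)
          (-(Matrix.circulant fb)ᵀ) (Matrix.circulant fa)ᵀ)ᵀ
      = Matrix.fromBlocks
          ((2 * ((v : ℤ) - 1)) • (1 : Matrix (ZMod v) (ZMod v) ℤ)
            + (2 : ℤ) • Matrix.of (fun _ _ => (1 : ℤ))) 0 0
          ((2 * ((v : ℤ) - 1)) • (1 : Matrix (ZMod v) (ZMod v) ℤ)
            + (2 : ℤ) • Matrix.of (fun _ _ => (1 : ℤ))) := by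
  set A := Matrix.circulant fa with hA
  set B := Matrix.circulant fb with hB
  set M : Matrix (ZMod v) (ZMod v) ℤ :=
    (2 * ((v : ℤ) - 1)) • (1 : Matrix (ZMod v) (ZMod v) ℤ)
      + (2 : ℤ) • Matrix.of (fun _ _ => (1 : ℤ)) with hM
  -- key sum identity
  obtain ⟨t, ht⟩ := hv
  have key : ∀ d : ZMod v,
      (∑ m : ZMod v, fa m * fa (m - d)) + (∑ m : ZMod v, fb m * fb (m - d))
        = if d = 0 then 2 * (v : ℤ) else 2 := by
    intro d
    rw [autocorr_aux v X fa hfa d, autocorr_aux v Y fb hfb d, hX, hY]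
    split_ifs with hd
    · subst hd
      have hXd : ((X ×ˢ X).filter (fun p => p.1 - p.2 = (0 : ZMod v))).card = r := by
        rw [← hX]
        apply Finset.card_bij (fun p _ => p.1)
        · intro p hp
          rw [Finset.mem_filter, Finset.mem_product] at hp
          exact hp.1.1
        · intro p hp q hq h
          rw [Finset.mem_filter, Finset.mem_product] at hp hq
          have h1 : p.1 = p.2 := by have := hp.2; rwa [sub_eq_zero] at this
          have h2 : q.1 = q.2 := by have := hq.2; rwa [sub_eq_zero] at this
          exact Prod.ext h (by rw [← h1, ← h2, h])
        · intro a ha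
          exact ⟨(a, a), Finset.mem_filter.mpr ⟨Finset.mem_product.mpr ⟨ha, ha⟩, by ring⟩, rfl⟩
      have hYd : ((Y ×ˢ Y).filter (fun p => p.1 - p.2 = (0 : ZMod v))).card = s := by
        rw [← hY]
        apply Finset.card_bij (fun p _ => p.1)
        · intro p hp
          rw [Finset.mem_filter, Finset.mem_product] at hp
          exact hp.1.1
        · intro p hp q hq h
          rw [Finset.mem_filter, Finset.mem_product] at hp hq
          have h1 : p.1 = p.2 := by have := hp.2; rwa [sub_eq_zero] at this
          have h2 : q.1 = q.2 := by have := hq.2; rwa [sub_eq_zero] at this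
          exact Prod.ext h (by rw [← h1, ← h2, h])
        · intro a ha
          exact ⟨(a, a), Finset.mem_filter.mpr ⟨Finset.mem_product.mpr ⟨ha, ha⟩, by ring⟩, rfl⟩
      rw [hXd, hYd]; ring
    · have hsum := hSDS d hd
      have hlam' : (lam : ℤ) = (r : ℤ) + s - t := by
        rw [hlam]
        have : ((v : ℤ) - 1) / 2 = t := by
          have : (v : ℤ) = 2 * t + 1 := by exact_mod_cast ht
          omega
        rw [this]
      have hcast : ((X ×ˢ X).filter (fun p => p.1 - p.2 = d)).card
          + (((Y ×ˢ Y).filter (fun p => p.1 - p.2 = d)).card : ℤ) = (lam : ℤ) := by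
        exact_mod_cast congrArg (Nat.cast : ℕ → ℤ) hsum
      have hvt : (v : ℤ) = 2 * t + 1 := by exact_mod_cast ht
      linarith
  -- entry formula for M
  have hMapp : ∀ i j : ZMod v, M i j = if i = j then 2 * (v : ℤ) else 2 := by
    intro i j
    rw [hM]
    simp only [Matrix.add_apply, Matrix.smul_apply, Matrix.one_apply, Matrix.of_apply,
      smul_eq_mul]
    split_ifs <;> ring
  -- the four blocks
  have h1 : A * Aᵀ + B * Bᵀ = M := by
    ext i j
    rw [Matrix.add_apply, hA, hB, circ_mul_transpose_apply, circ_mul_transpose_apply,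
      key (i - j), hMapp i j]
    by_cases h : i = j
    · simp [h]
    · rw [if_neg h, if_neg (sub_ne_zero.mpr h)]
  have h4 : Bᵀ * B + Aᵀ * A = M := by
    ext i j
    rw [Matrix.add_apply, hA, hB, transpose_mul_circ_apply, transpose_mul_circ_apply,
      hMapp i j, add_comm, key (i - j)]
    by_cases h : i = j
    · simp [h]
    · rw [if_neg h, if_neg (sub_ne_zero.mpr h)]
  have hcomm : A * B = B * A := Matrix.circulant_mul_comm fa fb
  have hcommT : Aᵀ * Bᵀ = Bᵀ * Aᵀ := by
    rw [hA, hB, Matrix.transpose_circulant, Matrix.transpose_circulant]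
    exact Matrix.circulant_mul_comm _ _
  rw [Matrix.fromBlocks_transpose, Matrix.fromBlocks_multiply]
  rw [Matrix.transpose_neg, Matrix.transpose_transpose, Matrix.transpose_transpose]
  have h2 : A * -B + B * A = 0 := by rw [mul_neg, hcomm]; exact neg_add_cancel _
  have h3 : -Bᵀ * Aᵀ + Aᵀ * Bᵀ = 0 := by rw [neg_mul, hcommT]; exact neg_add_cancel _
  have h4' : -Bᵀ * -B + Aᵀ * A = M := by rw [neg_mul_neg]; exact h4
  rw [h1, h2, h3, h4']
end
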